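/- If $\mathcal{C}$ is a linear $[n,k,d]$ code over $GF(q)$ that is MDS (i.e., $d = n - k + 1$) with $k \geq 2$, then $n \leq q + k - 1$; equivalently, $d \leq q$. -/

import Mathlib

open scoped Classical

/-- Hamming weight of a vector. -/
noncomputable def wt {ι F : Type*} [Fintype ι] [Zero F] (x : ι → F) : ℕ :=
  (Finset.univ.filter (fun i => x i ≠ 0)).card

/-- Minimum distance of a linear code (minimum weight of a nonzero codeword). -/
noncomputable def minDist {ι F : Type*} [Fintype ι] [Field F]
    (C : Submodule F (ι → F)) : ℕ :=
  sInf {w | ∃ c ∈ C, c ≠ 0 ∧ wt c = w}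

/-!
Take a codeword `c` of minimum weight `d` and a set `T` of `k - 2` coordinates outside its
support. The codewords vanishing on `T` form a space of dimension at least `2`, so one of them,
`x`, is not a multiple of `c`. If `d > q`, two of the `d` ratios `x i / c i` on the support of `c`
coincide, say with `a`; then `x - a • c` is a nonzero codeword vanishing on `k` coordinates, so
its weight is at most `n - k < d`.
-/

open Finset Module

section Hamming

variable {ι F : Type*} [Fintype ι]

lemma wt_add_card_le_of_eq_zero_on [Zero F] {x : ι → F} {Z : Finset ι}
    (hZ : ∀ i ∈ Z, x i = 0) : wt x + #Z ≤ Fintype.card ι := by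
  have hsupp : univ.filter (fun i => x i ≠ 0) ⊆ Zᶜ := fun i hi =>
    mem_compl.mpr fun hiZ => (mem_filter.mp hi).2 (hZ i hiZ)
  have := card_le_card hsupp
  rw [card_compl] at this
  have := card_le_univ Z
  unfold wt
  omega

variable [Field F] {C : Submodule F (ι → F)}

lemma minDist_le_wt {c : ι → F} (hc : c ∈ C) (hc0 : c ≠ 0) : minDist C ≤ wt c :=
  Nat.sInf_le ⟨c, hc, hc0, rfl⟩

lemma exists_wt_eq_minDist (hC : C ≠ ⊥) : ∃ c ∈ C, c ≠ 0 ∧ wt c = minDist C := by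
  obtain ⟨c, hc, hc0⟩ := Submodule.exists_mem_ne_zero_of_ne_bot hC
  exact Nat.sInf_mem (s := {w | ∃ c ∈ C, c ≠ 0 ∧ wt c = w}) ⟨wt c, c, hc, hc0, rfl⟩

lemma exists_mem_eq_zero_on_notMem_span (T : Finset ι) {c : ι → F} (hc : c ∈ C)
    (hT : #T + 2 ≤ finrank F C) :
    ∃ x ∈ C, (∀ i ∈ T, x i = 0) ∧ x ∉ F ∙ c := by
  let f : C →ₗ[F] (T → F) := (LinearMap.funLeft F F ((↑) : T → ι)).comp C.subtype
  have hf : ∀ x : C, x ∈ LinearMap.ker f ↔ ∀ i ∈ T, (x : ι → F) i = 0 := fun x => by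
    simp [f, funext_iff, LinearMap.funLeft_apply]
  have hker : 2 ≤ finrank F (LinearMap.ker f) := by
    have hrange : finrank F (LinearMap.range f) ≤ #T := by
      simpa using Submodule.finrank_le (LinearMap.range f)
    have := LinearMap.finrank_range_add_finrank_ker f
    omega
  by_contra! h
  have hle : LinearMap.ker f ≤ F ∙ (⟨c, hc⟩ : C) := fun x hx => by
    obtain ⟨a, ha⟩ := Submodule.mem_span_singleton.mp (h x x.2 ((hf x).mp hx))
    exact Submodule.mem_span_singleton.mpr ⟨a, Subtype.ext (by simpa using ha)⟩
  have := (Submodule.finrank_mono hle).trans (finrank_span_le_card {(⟨c, hc⟩ : C)})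
  rw [Set.toFinset_singleton, card_singleton] at this
  omega

end Hamming

lemma exists_ne_eq_mul_of_card_lt {ι F : Type*} [Field F] [Fintype F] (c x : ι → F)
    {S : Finset ι} (hS : ∀ i ∈ S, c i ≠ 0) (hcard : Fintype.card F < #S) :
    ∃ a : F, ∃ i ∈ S, ∃ j ∈ S, i ≠ j ∧ x i = a * c i ∧ x j = a * c j := by
  obtain ⟨i, hi, j, hj, hij, heq⟩ := exists_ne_map_eq_of_card_lt_of_maps_to
    (t := univ) (f := fun i => x i / c i) (by simpa using hcard)
    (fun _ _ => mem_coe.mpr (mem_univ _))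
  refine ⟨x i / c i, i, hi, j, hj, hij, ?_, ?_⟩
  · rw [div_mul_cancel₀ _ (hS i hi)]
  · rw [heq, div_mul_cancel₀ _ (hS j hj)]

theorem stmt_1 {F : Type*} [Field F] [Fintype F] {n q k d : ℕ}
    (C : Submodule F (Fin n → F))
    (hq : Fintype.card F = q)
    (hk : Module.finrank F C = k)
    (hd : minDist C = d)
    (hmds : d + k = n + 1)
    (hk2 : 2 ≤ k) :
    n + 1 ≤ q + k ∧ d ≤ q := by
  suffices h : d ≤ q from ⟨by omega, h⟩
  by_contra! hqd
  have hC : C ≠ ⊥ := fun h => by rw [h, finrank_bot] at hk; omega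
  obtain ⟨c, hc, hc0, hwc⟩ := exists_wt_eq_minDist hC
  set S := univ.filter (fun i => c i ≠ 0)
  have hS : #S = d := hwc.trans hd
  obtain ⟨T, hTS, hT⟩ := exists_subset_card_eq (s := Sᶜ) (n := k - 2) (by
    rw [card_compl, Fintype.card_fin, hS]; omega)
  obtain ⟨x, hx, hxT, hxc⟩ := exists_mem_eq_zero_on_notMem_span T hc (by omega)
  obtain ⟨a, i, hi, j, hj, hij, hxi, hxj⟩ :=
    exists_ne_eq_mul_of_card_lt c x (S := S) (fun i hi => (mem_filter.mp hi).2) (by omega)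
  have hcT : ∀ l ∈ T, c l = 0 := fun l hl => by simpa [S] using hTS hl
  have hZ : #(insert i (insert j T)) = k := by
    have hiT : i ∉ T := fun h => mem_compl.mp (hTS h) hi
    have hjT : j ∉ T := fun h => mem_compl.mp (hTS h) hj
    rw [card_insert_of_notMem (by simp [hij, hiT]), card_insert_of_notMem hjT]
    omega
  have hyZ : ∀ l ∈ insert i (insert j T), (x - a • c) l = 0 := by
    simp only [mem_insert, Pi.sub_apply, Pi.smul_apply, smul_eq_mul, sub_eq_zero]
    rintro l (rfl | rfl | hl)
    · exact hxi
    · exact hxj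
    · rw [hxT l hl, hcT l hl, mul_zero]
  have hy0 : x - a • c ≠ 0 := fun h =>
    hxc (Submodule.mem_span_singleton.mpr ⟨a, (sub_eq_zero.mp h).symm⟩)
  have hdy := minDist_le_wt (C.sub_mem hx (C.smul_mem a hc)) hy0
  have hwy := wt_add_card_le_of_eq_zero_on hyZ
  rw [hZ, Fintype.card_fin] at hwy
  omega
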